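/- (First Milnor–Švarc lemma) Suppose G is a metrisable topological group admitting a metrically proper, cobounded, continuous isometric action G ↷ (X,d) on a connected metric space (X,d). Then G admits a maximal compatible left-invariant metric. -/

import Mathlib

open Filter Topology
open scoped Pointwise

/-- A (plain) metric given as a distance function. -/
def IsMetric {G : Type*} (d : G → G → ℝ) : Prop :=
  (∀ x y, d x y = 0 ↔ x = y) ∧ (∀ x y, d x y = d y x) ∧ ∀ x y z, d x z ≤ d x y + d y z

/-- The metric `d` induces the topology of `G`. -/
def IsCompatible (G : Type*) [TopologicalSpace G] (d : G → G → ℝ) : Prop :=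
  ∀ (x : G) (s : Set G), s ∈ nhds x ↔ ∃ ε > (0 : ℝ), {y : G | d x y < ε} ⊆ s

/-- A compatible left-invariant metric on a topological group. -/
def IsCompatibleLeftInvariantMetric (G : Type*) [Group G] [TopologicalSpace G]
    (d : G → G → ℝ) : Prop :=
  IsMetric d ∧ IsCompatible G d ∧ ∀ h g f : G, d (h * g) (h * f) = d g f

/-- A set has finite diameter with respect to `d`. -/
def FiniteDiam {G : Type*} (d : G → G → ℝ) (A : Set G) : Prop :=
  ∃ C : ℝ, ∀ x ∈ A, ∀ y ∈ A, d x y ≤ C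

/-- `A` has property (OB) relative to `G`: finite diameter for every compatible
left-invariant metric. -/
def HasRelPropOB (G : Type*) [Group G] [TopologicalSpace G] (A : Set G) : Prop :=
  ∀ d : G → G → ℝ, IsCompatibleLeftInvariantMetric G d → FiniteDiam d A

/-- A sequence tends to infinity in `G` if some compatible left-invariant metric
witnesses `d (g n) 1 → ∞`. -/
def TendsToInfinity (G : Type*) [Group G] [TopologicalSpace G] (g : ℕ → G) : Prop :=
  ∃ d : G → G → ℝ, IsCompatibleLeftInvariantMetric G d ∧
    Filter.Tendsto (fun n => d (g n) 1) Filter.atTop Filter.atTop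

/-- A compatible left-invariant metric is metrically proper if `d (g n) 1 → ∞`
whenever `g n → ∞`. -/
def MetricallyProperMetric (G : Type*) [Group G] [TopologicalSpace G]
    (d : G → G → ℝ) : Prop :=
  ∀ g : ℕ → G, TendsToInfinity G g →
    Filter.Tendsto (fun n => d (g n) 1) Filter.atTop Filter.atTop


/-!
Fix `x₀ ∈ X` and `C` such that every point lies within `C` of the orbit of `x₀`, and let `V` be
the set of `g` moving `x₀` by less than `2 * C + 2`. Then `V` is an open symmetric neighbourhood
of `1`; it generates `G` because `X` is connected, and it is bounded for every compatible
left-invariant metric because the action is metrically proper. Weight each letter `h ∈ V` by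
`ρ 1 h`, where `ρ` is a compatible left-invariant metric given by the Birkhoff–Kakutani
construction. The resulting word metric agrees with `ρ` near `1`,
so it is compatible. A compatible left-invariant metric `e` is bounded by some `M` on `V`, and
cutting a word into blocks of `ρ`-weight about `η`, where the `ρ`-ball of radius `η` lies in `V`,
bounds `e` by `2 * M / η` times the word metric plus a constant.
-/

open scoped NNReal

section LeftInvariantMetric

variable {G : Type*}

theorem IsMetric.nonneg {d : G → G → ℝ} (hd : IsMetric d) (x y : G) : 0 ≤ d x y := by
  have := hd.2.2 x y x
  rw [hd.2.1 y x, (hd.1 x x).2 rfl] at this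
  linarith

theorem IsCompatible.hasBasis [TopologicalSpace G] {d : G → G → ℝ} (hd : IsCompatible G d)
    (x : G) : (𝓝 x).HasBasis (fun ε : ℝ => 0 < ε) fun ε => {y | d x y < ε} :=
  ⟨hd x⟩

variable [Group G]

theorem apply_eq_apply_one_inv_mul {d : G → G → ℝ}
    (hinv : ∀ h g f : G, d (h * g) (h * f) = d g f) (g f : G) : d g f = d 1 (g⁻¹ * f) := by
  rw [← hinv g 1, mul_one, mul_inv_cancel_left]

theorem apply_one_mul_le {d : G → G → ℝ} (hd : IsMetric d)
    (hinv : ∀ h g f : G, d (h * g) (h * f) = d g f) (x y : G) : d 1 (x * y) ≤ d 1 x + d 1 y := by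
  rw [← hinv x 1 y, mul_one]
  exact hd.2.2 1 x (x * y)

theorem isMetric_inv_mul {N : G → ℝ} (hN : ∀ x, N x = 0 ↔ x = 1) (hinv : ∀ x, N x⁻¹ = N x)
    (hmul : ∀ x y, N (x * y) ≤ N x + N y) : IsMetric fun g f => N (g⁻¹ * f) := by
  refine ⟨fun g f => by rw [hN, inv_mul_eq_one], fun g f => ?_, fun g f k => ?_⟩
  · change N (g⁻¹ * f) = N (f⁻¹ * g)
    rw [← hinv, mul_inv_rev, inv_inv]
  · simpa [mul_assoc] using hmul (g⁻¹ * f) (f⁻¹ * k)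

theorem isCompatible_of_hasBasis [TopologicalSpace G] [IsTopologicalGroup G] {d : G → G → ℝ}
    (hinv : ∀ h g f : G, d (h * g) (h * f) = d g f)
    (hbasis : (𝓝 (1 : G)).HasBasis (fun ε : ℝ => 0 < ε) fun ε => {z | d 1 z < ε}) :
    IsCompatible G d := by
  intro x s
  rw [← map_mul_left_nhds_one x, mem_map, hbasis.mem_iff]
  refine exists_congr fun ε => and_congr_right fun _ => ⟨fun h y hy => ?_, fun h z hz => h ?_⟩
  · simpa using h (show x⁻¹ * y ∈ {z | d 1 z < ε} by
      rwa [Set.mem_ofPred_eq, ← apply_eq_apply_one_inv_mul hinv])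
  · rwa [Set.mem_ofPred_eq, apply_eq_apply_one_inv_mul hinv, inv_mul_cancel_left]

end LeftInvariantMetric

theorem PseudoMetricSpace.dist_ofPreNNDist_equiv {X : Type*} {d : X → X → ℝ≥0}
    (dist_self : ∀ x, d x x = 0) (dist_comm : ∀ x y, d x y = d y x) (e : X ≃ X)
    (he : ∀ x y, d (e x) (e y) = d x y) (x y : X) :
    (ofPreNNDist d dist_self dist_comm).dist (e x) (e y) =
      (ofPreNNDist d dist_self dist_comm).dist x y := by
  rw [dist_ofPreNNDist, dist_ofPreNNDist, NNReal.coe_inj]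
  refine ((Equiv.listEquivOfEquiv e).iInf_congr fun l => ?_).symm
  have hcons : e x :: l.map e = (x :: l).map e := rfl
  have hsnoc : l.map e ++ [e y] = (l ++ [y]).map e := by simp
  simp only [Equiv.listEquivOfEquiv, Equiv.coe_fn_mk, hcons, hsnoc, List.zipWith_map, he]

section BirkhoffKakutani

variable {G : Type*}

-- For antitone `W`: `(1 / 2) ^ n` for the least `n` with `z ∉ W n`, and `0` if there is none.
noncomputable def dyadicGauge (W : ℕ → Set G) (z : G) : ℝ≥0 :=
  ⨆ n, (W n)ᶜ.indicator (fun _ => (1 / 2 : ℝ≥0) ^ n) z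

theorem bddAbove_range_dyadicGauge (W : ℕ → Set G) (z : G) :
    BddAbove (Set.range fun n => (W n)ᶜ.indicator (fun _ => (1 / 2 : ℝ≥0) ^ n) z) := by
  refine ⟨1, Set.forall_mem_range.2 fun n => ?_⟩
  exact (Set.indicator_le_self' (fun _ _ => zero_le) z).trans (pow_le_one₀ zero_le (by norm_num))

variable {W : ℕ → Set G}

theorem pow_le_dyadicGauge_iff (hW : Antitone W) (z : G) (n : ℕ) :
    (1 / 2 : ℝ≥0) ^ n ≤ dyadicGauge W z ↔ z ∉ W n := by
  refine ⟨fun h hz => ?_, fun hz => ?_⟩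
  · have hle : dyadicGauge W z ≤ (1 / 2) ^ (n + 1) := ciSup_le fun m => by
      by_cases hm : z ∈ W m
      · simp [hm]
      · have hnm : n < m := lt_of_not_ge fun hmn => hm (hW hmn hz)
        rw [Set.indicator_of_mem (Set.mem_compl hm)]
        exact pow_le_pow_of_le_one zero_le (by norm_num) hnm
    have := h.trans hle
    rw [pow_succ] at this
    exact absurd this (not_le.2 (mul_lt_of_lt_one_right (by positivity) (by norm_num)))
  · refine le_trans (le_of_eq ?_) (le_ciSup (bddAbove_range_dyadicGauge W z) n)
    rw [Set.indicator_of_mem (Set.mem_compl hz)]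

theorem dyadicGauge_inv [InvolutiveInv G] (hW : ∀ n, ∀ z ∈ W n, z⁻¹ ∈ W n) (z : G) :
    dyadicGauge W z⁻¹ = dyadicGauge W z := by
  have hiff : ∀ n, z⁻¹ ∈ W n ↔ z ∈ W n := fun n => ⟨fun h => by simpa using hW n _ h, hW n z⟩
  refine iSup_congr fun n => ?_
  by_cases hz : z ∈ W n
  · rw [Set.indicator_of_notMem (Set.notMem_compl_iff.2 ((hiff n).2 hz)),
      Set.indicator_of_notMem (Set.notMem_compl_iff.2 hz)]
  · rw [Set.indicator_of_mem (Set.mem_compl (mt (hiff n).1 hz)),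
      Set.indicator_of_mem (Set.mem_compl hz)]

theorem dyadicGauge_mul_mul_le [Mul G] (hW : Antitone W)
    (h3 : ∀ n, W (n + 1) * W (n + 1) * W (n + 1) ⊆ W n) (a b c : G) : dyadicGauge W (a * b * c) ≤
      2 * max (dyadicGauge W a) (max (dyadicGauge W b) (dyadicGauge W c)) := by
  refine ciSup_le fun n => ?_
  by_cases habc : a * b * c ∈ W n
  · simp [habc]
  have hout : (1 / 2 : ℝ≥0) ^ (n + 1) ≤
      max (dyadicGauge W a) (max (dyadicGauge W b) (dyadicGauge W c)) := by
    simp only [le_max_iff, pow_le_dyadicGauge_iff hW]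
    by_contra! h
    exact habc (h3 n (Set.mul_mem_mul (Set.mul_mem_mul h.1 h.2.1) h.2.2))
  rw [Set.indicator_of_mem (Set.mem_compl habc)]
  calc (1 / 2 : ℝ≥0) ^ n = 2 * (1 / 2) ^ (n + 1) := by ring
    _ ≤ _ := by gcongr

theorem hasBasis_of_dyadicGauge [TopologicalSpace G] {a : G} (hW : (𝓝 a).HasAntitoneBasis W)
    {δ : G → ℝ} (hle : ∀ z, δ z ≤ dyadicGauge W z)
    (hge : ∀ z, (dyadicGauge W z : ℝ) ≤ 2 * δ z) :
    (𝓝 a).HasBasis (fun ε : ℝ => 0 < ε) fun ε => {z | δ z < ε} := by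
  refine hW.toHasBasis.to_hasBasis (fun n _ => ⟨(1 / 2) ^ n / 2, by positivity, fun z hz => ?_⟩)
    fun ε hε => ?_
  · by_contra hzn
    have := NNReal.coe_le_coe.2 ((pow_le_dyadicGauge_iff hW.antitone z n).2 hzn)
    push_cast at this
    linarith [hge z, show δ z < (1 / 2) ^ n / 2 from hz]
  · obtain ⟨n, hn⟩ := exists_pow_lt_of_lt_one hε (by norm_num : (1 / 2 : ℝ) < 1)
    refine ⟨n, trivial, fun z hz => ?_⟩
    have := NNReal.coe_lt_coe.2
      (not_le.1 (mt (pow_le_dyadicGauge_iff hW.antitone z n).1 (not_not.2 hz)))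
    push_cast at this
    exact (hle z).trans_lt (this.trans hn)

end BirkhoffKakutani

theorem exists_antitone_basis_nhds_one_inv_mul_mul (G : Type*) [Group G] [TopologicalSpace G]
    [IsTopologicalGroup G] [FirstCountableTopology G] :
    ∃ W : ℕ → Set G, (𝓝 1).HasAntitoneBasis W ∧ (∀ n, ∀ z ∈ W n, z⁻¹ ∈ W n) ∧
      ∀ n, W (n + 1) * W (n + 1) * W (n + 1) ⊆ W n := by
  obtain ⟨u, hu, hu2⟩ := IsTopologicalGroup.exists_antitone_basis_nhds_one G
  have hu3 : ∀ n, u (n + 2) * u (n + 2) * u (n + 2) ⊆ u n := fun n =>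
    (Set.mul_subset_mul (hu2 (n + 1)) (hu.antitone (Nat.le_succ _))).trans (hu2 n)
  refine ⟨fun n => u (2 * n) ∩ (u (2 * n))⁻¹, ⟨hu.toHasBasis.to_hasBasis
    (fun n _ => ⟨n, trivial, Set.inter_subset_left.trans (hu.antitone (by omega))⟩)
    (fun n _ => ?_), fun m n hmn => ?_⟩, fun n z hz => ?_, fun n => ?_⟩
  · obtain ⟨i, -, hi⟩ := hu.toHasBasis.mem_iff.1
      (inter_mem (hu.mem (2 * n)) (inv_mem_nhds_one G (hu.mem (2 * n))))
    exact ⟨i, trivial, hi⟩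
  · exact Set.inter_subset_inter (hu.antitone (by omega))
      (Set.inv_subset_inv.2 (hu.antitone (by omega)))
  · exact ⟨hz.2, by simpa using hz.1⟩
  · rintro _ ⟨_, ⟨a, ⟨ha, ha'⟩, b, ⟨hb, hb'⟩, rfl⟩, c, ⟨hc, hc'⟩, rfl⟩
    refine ⟨hu3 _ (Set.mul_mem_mul (Set.mul_mem_mul ha hb) hc), ?_⟩
    simpa [mul_assoc] using hu3 _ (Set.mul_mem_mul (Set.mul_mem_mul hc' hb') ha')

theorem exists_isCompatibleLeftInvariantMetric (G : Type*) [Group G] [TopologicalSpace G]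
    [IsTopologicalGroup G] [FirstCountableTopology G] [T1Space G] :
    ∃ ρ : G → G → ℝ, IsCompatibleLeftInvariantMetric G ρ := by
  obtain ⟨W, hW, hWinv, hW3⟩ := exists_antitone_basis_nhds_one_inv_mul_mul G
  have hν1 : dyadicGauge W 1 = 0 :=
    le_antisymm (ciSup_le fun n => by simp [mem_of_mem_nhds (hW.mem n)]) zero_le
  have hνinv := dyadicGauge_inv hWinv
  set ν : G → G → ℝ≥0 := fun x y => dyadicGauge W (x⁻¹ * y)
  have hself : ∀ x, ν x x = 0 := fun x => by simp [ν, hν1]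
  have hcomm : ∀ x y, ν x y = ν y x := fun x y => by
    simp only [ν]
    rw [← hνinv, mul_inv_rev, inv_inv]
  let I := PseudoMetricSpace.ofPreNNDist ν hself hcomm
  have hinv : ∀ h x y : G, I.dist (h * x) (h * y) = I.dist x y := fun h =>
    PseudoMetricSpace.dist_ofPreNNDist_equiv hself hcomm (Equiv.mulLeft h) fun x y => by
      simp [ν, mul_assoc]
  have hbasis := hasBasis_of_dyadicGauge hW (δ := I.dist 1)
    (fun z => by simpa [ν] using PseudoMetricSpace.dist_ofPreNNDist_le ν hself hcomm 1 z)
    fun z => by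
      simpa [ν] using PseudoMetricSpace.le_two_mul_dist_ofPreNNDist ν hself hcomm
        (fun x₁ x₂ x₃ x₄ => by
          simpa [ν, mul_assoc] using dyadicGauge_mul_mul_le hW.antitone hW3
            (x₁⁻¹ * x₂) (x₂⁻¹ * x₃) (x₃⁻¹ * x₄)) 1 z
  refine ⟨I.dist, ⟨⟨fun x y => ⟨fun hxy => ?_, fun h => h ▸ @dist_self G I x⟩,
    @dist_comm G I, @dist_triangle G I⟩, isCompatible_of_hasBasis hinv hbasis, hinv⟩⟩
  by_contra hne
  obtain ⟨ε, hε, hsub⟩ :=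
    hbasis.mem_iff.1 (compl_singleton_mem_nhds (Ne.symm (mt inv_mul_eq_one.1 hne)))
  exact hsub (show I.dist 1 (x⁻¹ * y) < ε by rwa [← hinv x, mul_one, mul_inv_cancel_left, hxy])
    rfl

section WordLength

variable {G : Type*} [Monoid G] {V : Set G} {c : G → ℝ}

-- The infimum is over the empty type, hence `0`, when `x` is not a product of letters from `V`.
noncomputable def wordLength (V : Set G) (c : G → ℝ) (x : G) : ℝ :=
  ⨅ l : {l : List G // (∀ h ∈ l, h ∈ V) ∧ l.prod = x}, (l.1.map c).sum

theorem wordLength_le (hc : ∀ h ∈ V, 0 ≤ c h) {l : List G} (hl : ∀ h ∈ l, h ∈ V) :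
    wordLength V c l.prod ≤ (l.map c).sum := by
  refine ciInf_le ?_ (⟨l, hl, rfl⟩ : {l' : List G // (∀ h ∈ l', h ∈ V) ∧ l'.prod = l.prod})
  refine ⟨0, ?_⟩
  rintro _ ⟨l', rfl⟩
  exact List.sum_nonneg (by simpa using fun h hh => hc h (l'.2.1 h hh))

theorem le_wordLength (hV : Submonoid.closure V = ⊤) {x : G} {b : ℝ}
    (h : ∀ l : List G, (∀ h ∈ l, h ∈ V) → l.prod = x → b ≤ (l.map c).sum) :
    b ≤ wordLength V c x := by
  obtain ⟨l, hl, rfl⟩ := Submonoid.exists_list_of_mem_closure (hV ▸ Submonoid.mem_top x)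
  have : Nonempty {l' : List G // (∀ h ∈ l', h ∈ V) ∧ l'.prod = l.prod} := ⟨⟨l, hl, rfl⟩⟩
  exact le_ciInf fun l' => h l'.1 l'.2.1 l'.2.2

theorem wordLength_nonneg (hc : ∀ h ∈ V, 0 ≤ c h) (hV : Submonoid.closure V = ⊤) (x : G) :
    0 ≤ wordLength V c x :=
  le_wordLength hV fun l hl _ => List.sum_nonneg (by simpa using fun h hh => hc h (hl h hh))

theorem wordLength_le_of_mem (hc : ∀ h ∈ V, 0 ≤ c h) {x : G} (hx : x ∈ V) :
    wordLength V c x ≤ c x := by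
  simpa using wordLength_le hc (l := [x]) (by simpa using hx)

theorem wordLength_mul_le (hc : ∀ h ∈ V, 0 ≤ c h) (hV : Submonoid.closure V = ⊤) (x y : G) :
    wordLength V c (x * y) ≤ wordLength V c x + wordLength V c y := by
  suffices wordLength V c (x * y) - wordLength V c y ≤ wordLength V c x by linarith
  refine le_wordLength hV fun l₁ hl₁ hx => ?_
  suffices wordLength V c (x * y) - (l₁.map c).sum ≤ wordLength V c y by linarith
  refine le_wordLength hV fun l₂ hl₂ hy => ?_
  have := wordLength_le hc (l := l₁ ++ l₂) fun h hh =>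
    (List.mem_append.1 hh).elim (hl₁ h) (hl₂ h)
  rw [List.prod_append, hx, hy, List.map_append, List.sum_append] at this
  linarith

theorem apply_le_wordLength {N : G → ℝ} (hV : Submonoid.closure V = ⊤) (hN1 : N 1 = 0)
    (hN : ∀ x y, N (x * y) ≤ N x + N y) (hNc : ∀ h ∈ V, N h ≤ c h) (x : G) :
    N x ≤ wordLength V c x := by
  refine le_wordLength hV fun l hl hx => ?_
  subst hx
  induction l with
  | nil => simp [hN1]
  | cons h l ih =>
    simp only [List.mem_cons, forall_eq_or_imp] at hl
    simp only [List.prod_cons, List.map_cons, List.sum_cons]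
    linarith [hN h l.prod, hNc h hl.1, ih hl.2]

end WordLength

theorem wordLength_inv {G : Type*} [Group G] {V : Set G} {c : G → ℝ} (hc : ∀ h ∈ V, 0 ≤ c h)
    (hV : Submonoid.closure V = ⊤) (hVinv : ∀ h ∈ V, h⁻¹ ∈ V) (hcinv : ∀ h ∈ V, c h⁻¹ = c h)
    (x : G) : wordLength V c x⁻¹ = wordLength V c x := by
  have key : ∀ x : G, wordLength V c x⁻¹ ≤ wordLength V c x := fun x =>
    le_wordLength hV fun l hl hx => by
      have hl' : ∀ h ∈ (l.map (·⁻¹)).reverse, h ∈ V := fun h hh => by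
        rw [← inv_inv h]
        exact hVinv _ (hl _ (by simpa using hh))
      have hcost : (((l.map (·⁻¹)).reverse).map c).sum = (l.map c).sum := by
        rw [List.map_reverse, List.sum_reverse, List.map_map]
        exact congrArg _ (List.map_congr_left fun h hh => hcinv h (hl h hh))
      simpa only [← List.prod_inv_reverse, hx, hcost] using wordLength_le hc hl'
  exact le_antisymm (key x) (by simpa using key x⁻¹)

/-- A word is cut into blocks, each made of a prefix of `ℓ`-weight below `η`, which lies in `V`,
followed by one letter: a block has `ℓ`-weight at least `η` but `N`-value at most `2 * M`. -/
theorem apply_mul_list_prod_le {G : Type*} [Monoid G] {N ℓ : G → ℝ} {V : Set G} {K M η : ℝ}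
    (hK : 0 ≤ K) (hKM : 2 * M ≤ K * η) (hN : ∀ x y, N (x * y) ≤ N x + N y)
    (hℓ : ∀ x y, ℓ (x * y) ≤ ℓ x + ℓ y) (hℓ0 : ∀ x, 0 ≤ ℓ x) (hℓ1 : ℓ 1 = 0) (hη : 0 < η)
    (hNV : ∀ x ∈ V, N x ≤ M) (hηV : ∀ x, ℓ x < η → x ∈ V) (l : List G) (hl : ∀ h ∈ l, h ∈ V)
    (x : G) (hx : ℓ x < η) : N (x * l.prod) ≤ K * (ℓ x + (l.map ℓ).sum) + M := by
  induction l generalizing x with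
  | nil =>
    simp only [List.prod_nil, mul_one, List.map_nil, List.sum_nil, add_zero]
    linarith [hNV x (hηV x hx), mul_nonneg hK (hℓ0 x)]
  | cons h l ih =>
    simp only [List.mem_cons, forall_eq_or_imp] at hl
    rw [List.prod_cons, ← mul_assoc, List.map_cons, List.sum_cons]
    by_cases hxh : ℓ (x * h) < η
    · have := mul_le_mul_of_nonneg_left (hℓ x h) hK
      linarith [ih hl.2 (x * h) hxh]
    · have hblock := mul_le_mul_of_nonneg_left ((not_lt.1 hxh).trans (hℓ x h)) hK
      have hrest := ih hl.2 1 (hℓ1 ▸ hη)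
      rw [one_mul, hℓ1] at hrest
      linarith [hN (x * h) l.prod, hN x h, hNV x (hηV x hx), hNV h hl.1]

section WordMetric

variable {G : Type*} [Group G] [TopologicalSpace G] {ρ : G → G → ℝ} {V : Set G}

noncomputable def wordMetric (V : Set G) (ρ : G → G → ℝ) (g f : G) : ℝ :=
  wordLength V (ρ 1) (g⁻¹ * f)

theorem isCompatibleLeftInvariantMetric_wordMetric [IsTopologicalGroup G]
    (hρ : IsCompatibleLeftInvariantMetric G ρ) (hV : V ∈ 𝓝 1) (hVinv : ∀ h ∈ V, h⁻¹ ∈ V)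
    (hgen : Submonoid.closure V = ⊤) : IsCompatibleLeftInvariantMetric G (wordMetric V ρ) := by
  obtain ⟨hρm, hρc, hρi⟩ := hρ
  have hc : ∀ h ∈ V, 0 ≤ ρ 1 h := fun h _ => hρm.nonneg 1 h
  have hρ1 : ρ 1 1 = 0 := (hρm.1 1 1).2 rfl
  have hle : ∀ z, ρ 1 z ≤ wordLength V (ρ 1) z :=
    apply_le_wordLength hgen hρ1 (apply_one_mul_le hρm hρi) fun _ _ => le_rfl
  have hinv : ∀ h g f : G, wordMetric V ρ (h * g) (h * f) = wordMetric V ρ g f :=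
    fun h g f => by simp [wordMetric, mul_assoc]
  obtain ⟨η, hη, hηV⟩ := (hρc 1 V).1 hV
  refine ⟨isMetric_inv_mul (fun z => ⟨fun hz => ?_, fun hz => ?_⟩)
    (wordLength_inv hc hgen hVinv fun h _ => ?_) (wordLength_mul_le hc hgen),
    isCompatible_of_hasBasis hinv ?_, hinv⟩
  · exact ((hρm.1 1 z).1 (le_antisymm (hz ▸ hle z) (hρm.nonneg 1 z))).symm
  · subst hz
    exact le_antisymm (hρ1 ▸ wordLength_le_of_mem hc (mem_of_mem_nhds hV)) (hρ1 ▸ hle 1)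
  · rw [← hρi h, mul_one, mul_inv_cancel, hρm.2.1]
  · simp only [wordMetric, inv_one, one_mul]
    refine (hρc.hasBasis 1).to_hasBasis (fun ε hε => ⟨ε, hε, fun z hz => (hle z).trans_lt hz⟩)
      fun ε hε => ⟨min ε η, lt_min hε hη, fun z hz => ?_⟩
    have hz' : ρ 1 z < min ε η := hz
    exact (wordLength_le_of_mem hc (hηV (hz'.trans_le (min_le_right _ _)))).trans_lt
      (hz'.trans_le (min_le_left _ _))

theorem exists_le_mul_wordMetric_add (hρ : IsCompatibleLeftInvariantMetric G ρ) (hV : V ∈ 𝓝 1)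
    (hgen : Submonoid.closure V = ⊤) (hOB : HasRelPropOB G V) {e : G → G → ℝ}
    (he : IsCompatibleLeftInvariantMetric G e) :
    ∃ K : ℝ, 1 ≤ K ∧ ∀ g f : G, e g f ≤ K * wordMetric V ρ g f + K := by
  obtain ⟨C, hC⟩ := hOB e he
  obtain ⟨hρm, hρc, hρi⟩ := hρ
  obtain ⟨hem, -, hei⟩ := he
  obtain ⟨η, hη, hηV⟩ := (hρc 1 V).1 hV
  set M := max C 1
  have hM : 1 ≤ M := le_max_right _ _
  set K := 2 * M / η
  have hK : 0 < K := by positivity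
  have hρ1 : ρ 1 1 = 0 := (hρm.1 1 1).2 rfl
  have hlen : ∀ x, e 1 x ≤ K * wordLength V (ρ 1) x + M := fun x => by
    suffices (e 1 x - M) / K ≤ wordLength V (ρ 1) x by rw [div_le_iff₀ hK] at this; linarith
    refine le_wordLength hgen fun l hl hx => ?_
    have := apply_mul_list_prod_le hK.le (by rw [div_mul_cancel₀ _ hη.ne'])
      (apply_one_mul_le hem hei) (apply_one_mul_le hρm hρi) (hρm.nonneg 1) hρ1 hη
      (fun h hh => (hC 1 (mem_of_mem_nhds hV) h hh).trans (le_max_left C 1)) hηV l hl 1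
      (hρ1 ▸ hη)
    rw [one_mul, hρ1, zero_add, hx] at this
    rw [div_le_iff₀ hK]
    linarith
  refine ⟨max K M, hM.trans (le_max_right _ _), fun g f => ?_⟩
  have hd : 0 ≤ wordMetric V ρ g f := wordLength_nonneg (fun h _ => hρm.nonneg 1 h) hgen _
  calc e g f = e 1 (g⁻¹ * f) := apply_eq_apply_one_inv_mul hei g f
    _ ≤ K * wordMetric V ρ g f + M := hlen _
    _ ≤ max K M * wordMetric V ρ g f + max K M := by gcongr <;> simp

end WordMetric

theorem hasRelPropOB_setOf_lt {G : Type*} [Group G] [TopologicalSpace G] (φ : G → ℝ)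
    (hφ : ∀ g : ℕ → G, TendsToInfinity G g → Tendsto (fun n => φ (g n)) atTop atTop) (R : ℝ) :
    HasRelPropOB G {g | φ g < R} := by
  intro e he
  have hbdd : ∃ M, ∀ g, φ g < R → e g 1 ≤ M := by
    by_contra! h
    choose w hwR hwe using fun n : ℕ => h n
    obtain ⟨n, hn⟩ := ((hφ w ⟨e, he, tendsto_atTop_mono (fun n => (hwe n).le)
      tendsto_natCast_atTop_atTop⟩).eventually_ge_atTop R).exists
    exact (hwR n).not_ge hn
  obtain ⟨M, hM⟩ := hbdd
  exact ⟨2 * M, fun x hx y hy => by linarith [he.1.2.2 x 1 y, he.1.2.1 1 y, hM x hx, hM y hy]⟩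

theorem eq_univ_of_forall_dist_lt_mem {X : Type*} [PseudoMetricSpace X] [PreconnectedSpace X]
    {U : Set X} {ε : ℝ} (hε : 0 < ε) (hne : U.Nonempty)
    (hU : ∀ x ∈ U, ∀ y, dist x y < ε → y ∈ U) : U = Set.univ := by
  refine IsClopen.eq_univ ⟨?_, Metric.isOpen_iff.2 fun x hx => ⟨ε, hε, fun y hy => ?_⟩⟩ hne
  · rw [← isOpen_compl_iff, Metric.isOpen_iff]
    exact fun x hx => ⟨ε, hε, fun y hy hyU => hx (hU y hyU x (Metric.mem_ball.1 hy))⟩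
  · exact hU x hx y (by rwa [Metric.mem_ball, dist_comm] at hy)

theorem setOf_dist_smul_lt_mem_nhds_one {G X : Type*} [Monoid G] [MulAction G X]
    [TopologicalSpace G] [PseudoMetricSpace X] [ContinuousSMul G X] (x₀ : X) {R : ℝ} (hR : 0 < R) :
    {g : G | dist (g • x₀) x₀ < R} ∈ 𝓝 1 := by
  refine (isOpen_lt ((continuous_id.smul continuous_const).dist continuous_const)
    continuous_const).mem_nhds ?_
  change dist ((1 : G) • x₀) x₀ < R
  rwa [one_smul, dist_self]

section IsometricAction

variable {G X : Type*} [Group G] [MulAction G X] [PseudoMetricSpace X] [IsIsometricSMul G X]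

theorem exists_dist_smul_le_of_cobounded {A : Set X} {C : ℝ}
    (hA : ∀ x ∈ A, ∀ y ∈ A, dist x y ≤ C) (hcover : ∀ x : X, ∃ g : G, ∃ y ∈ A, x = g • y)
    (x₀ : X) (x : X) : ∃ g : G, dist x (g • x₀) ≤ C := by
  obtain ⟨g₀, y₀, hy₀, rfl⟩ := hcover x₀
  obtain ⟨g, y, hy, rfl⟩ := hcover x
  exact ⟨g * g₀⁻¹, by rw [mul_smul, inv_smul_smul, dist_smul]; exact hA y hy y₀ hy₀⟩

/-- Points of `X` are linked by chains of `1`-steps, and consecutive points of a chain lie within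
`C` of orbit points that differ by one of these displacements. -/
theorem closure_setOf_dist_smul_lt_eq_top [PreconnectedSpace X] {C : ℝ} (x₀ : X)
    (hC : ∀ x : X, ∃ g : G, dist x (g • x₀) ≤ C) :
    Submonoid.closure {g : G | dist (g • x₀) x₀ < 2 * C + 2} = ⊤ := by
  set H := Submonoid.closure {g : G | dist (g • x₀) x₀ < 2 * C + 2}
  have hstep : ∀ h ∈ H, ∀ g : G, dist (g • x₀) (h • x₀) < 2 * C + 2 → g ∈ H := by
    intro h hh g hg
    rw [← mul_inv_cancel_left h g]
    refine H.mul_mem hh (Submonoid.subset_closure ?_)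
    rwa [Set.mem_ofPred_eq, mul_smul, ← dist_smul h, smul_inv_smul]
  have hC0 : 0 ≤ C := (hC x₀).elim fun _ hg => dist_nonneg.trans hg
  have hU := eq_univ_of_forall_dist_lt_mem (U := {x : X | ∃ h ∈ H, dist x (h • x₀) < C + 1})
    one_pos ⟨x₀, 1, H.one_mem, by simp; linarith⟩ fun x ⟨h, hh, hx⟩ y hxy => by
      obtain ⟨g, hg⟩ := hC y
      refine ⟨g, hstep h hh g ?_, by linarith⟩
      calc dist (g • x₀) (h • x₀) ≤ dist (g • x₀) y + dist y x + dist x (h • x₀) :=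
            dist_triangle4 _ _ _ _
        _ < 2 * C + 2 := by linarith [dist_comm (g • x₀) y, dist_comm y x]
  refine eq_top_iff.2 fun g _ => ?_
  obtain ⟨h, hh, hg⟩ := Set.eq_univ_iff_forall.1 hU (g • x₀)
  exact hstep h hh g (by linarith)

theorem inv_mem_setOf_dist_smul_lt (x₀ : X) {R : ℝ} {g : G}
    (hg : g ∈ {g : G | dist (g • x₀) x₀ < R}) : g⁻¹ ∈ {g : G | dist (g • x₀) x₀ < R} := by
  rwa [Set.mem_ofPred_eq, ← dist_smul g, smul_inv_smul, dist_comm]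

end IsometricAction

theorem first_milnor_svarc {G : Type*} [Group G] [TopologicalSpace G]
    [IsTopologicalGroup G] [TopologicalSpace.MetrizableSpace G]
    {X : Type*} [MetricSpace X] [ConnectedSpace X] (a : G → X → X)
    (hone : ∀ x : X, a 1 x = x)
    (hmul : ∀ (g h : G) (x : X), a (g * h) x = a g (a h x))
    (hiso : ∀ (g : G) (x y : X), dist (a g x) (a g y) = dist x y)
    (hcont : Continuous fun p : G × X => a p.1 p.2)
    (hproper : ∀ (x : X) (g : ℕ → G), TendsToInfinity G g →
      Filter.Tendsto (fun n => dist (a (g n) x) x) Filter.atTop Filter.atTop)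
    (hcobounded : ∃ A : Set X, (∃ C : ℝ, ∀ x ∈ A, ∀ y ∈ A, dist x y ≤ C) ∧
      ∀ x : X, ∃ g : G, ∃ y ∈ A, x = a g y) :
    ∃ d : G → G → ℝ, IsCompatibleLeftInvariantMetric G d ∧
      ∀ e : G → G → ℝ, IsCompatibleLeftInvariantMetric G e →
        ∃ K : ℝ, 1 ≤ K ∧ ∀ g f : G, e g f ≤ K * d g f + K := by
  let _ : MulAction G X := { smul := a, one_smul := hone, mul_smul := hmul }
  have : IsIsometricSMul G X := ⟨fun g => Isometry.of_dist_eq (hiso g)⟩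
  have : ContinuousSMul G X := ⟨hcont⟩
  obtain ⟨ρ, hρ⟩ := exists_isCompatibleLeftInvariantMetric G
  obtain ⟨x₀⟩ : Nonempty X := inferInstance
  obtain ⟨A, ⟨C, hA⟩, hcover⟩ := hcobounded
  have hC := exists_dist_smul_le_of_cobounded hA hcover x₀
  have hC0 : 0 ≤ C := (hC x₀).elim fun _ hg => dist_nonneg.trans hg
  have hV := setOf_dist_smul_lt_mem_nhds_one (G := G) x₀ (by linarith : 0 < 2 * C + 2)
  have hgen := closure_setOf_dist_smul_lt_eq_top x₀ hC
  exact ⟨wordMetric _ ρ,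
    isCompatibleLeftInvariantMetric_wordMetric hρ hV (fun g => inv_mem_setOf_dist_smul_lt x₀) hgen,
    fun e he => exists_le_mul_wordMetric_add hρ hV hgen (hasRelPropOB_setOf_lt _ (hproper x₀) _) he⟩
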